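/- Linial arrangement count. For all integers n ≥ 2 and m ≥ 0, the number of integer points of [1,m]^n lying on none of the hyperplanes x_j = x_i + 1 (1 ≤ i < j ≤ n) of the Linial arrangement satisfies N_{[1,1]}(n,m) = ∑_{r=0}^{n−1} A(n, r+1) · C(m + n − 1 − 2r, n). -/

import Mathlib

/-!
Sort a Linial-free point `x` by value, breaking ties by decreasing index. The sorting permutation
`σ` is unique, and `y = x ∘ σ` is weakly increasing with a jump of at least `2` at every ascent
of `σ`: a tie there would have been sorted the other way, and a jump of `1` is a forbidden
`x j = x i + 1` with `i < j`. Conversely every such pair `(σ, y)` comes from a Linial-free point,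
since between positions `k < l` with `σ k < σ l` there is an ascent of `σ`, so `y l ≥ y k + 2`.
Adding `v - 2 · #(ascents below v)` to `y v` makes it strictly increasing with values in
`[1, m + n - 1 - 2r]`, where `r` is the number of ascents, leaving `C(m + n - 1 - 2r, n)` choices.
-/

open Finset

/-- `latticeCount a b n m` is `N_{[a,b]}(n,m)`: the number of maps `x : {1, …, n} → ℤ` with
`1 ≤ x i ≤ m` for all `i` and `x j ≠ x i + g` for all `i < j` and all gains `g` with
`a ≤ g ≤ b`.  Equivalently, the number of integer points of the cube `[1, m]^n` lying on none
of the affinographic hyperplanes `x j = x i + g` (`i < j`, `a ≤ g ≤ b`). -/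
noncomputable def latticeCount (a b : ℤ) (n : ℕ) (m : ℤ) : ℕ :=
  Nat.card {x : Fin n → ℤ // (∀ v, 1 ≤ x v ∧ x v ≤ m) ∧
    ∀ i j : Fin n, i < j → ∀ g : ℤ, a ≤ g → g ≤ b → x j ≠ x i + g}

/-- `eulerianNumber n r` is the Eulerian number `A(n, r + 1)`: the number of permutations `σ`
of `{1, …, n}` with exactly `r` ascents, an ascent being an index `1 ≤ i ≤ n − 1` with
`σ(i) < σ(i+1)`. -/
noncomputable def eulerianNumber (n r : ℕ) : ℕ :=
  Nat.card {σ : Equiv.Perm (Fin n) //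
    Nat.card {i : ℕ // ∃ h1 : i + 1 < n,
      σ ⟨i, Nat.lt_of_succ_lt h1⟩ < σ ⟨i + 1, h1⟩} = r}

/-- The binomial coefficient `C(t, n)` for an integer `t`, interpreted as `0` when `t < n`
(in particular when `t < 0`). -/
def intChoose (t : ℤ) (n : ℕ) : ℕ := t.toNat.choose n

theorem card_strictMono_mem {α : Type*} [LinearOrder α] (k : ℕ) (t : Set α) :
    Nat.card {z : Fin k → α // StrictMono z ∧ ∀ v, z v ∈ t} = (Nat.card t).choose k := by
  let e : {z : Fin k → α // StrictMono z ∧ ∀ v, z v ∈ t} ≃ (Fin k ↪o t) :=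
    { toFun z := OrderEmbedding.ofStrictMono (fun v => ⟨z.1 v, z.2.2 v⟩) fun _ _ h => z.2.1 h
      invFun f := ⟨fun v => f v, fun _ _ h => f.strictMono h, fun v => (f v).2⟩
      left_inv _ := rfl
      right_inv _ := rfl }
  rw [Nat.card_congr (e.trans Set.powersetCard.ofFinEmbEquiv), Set.powersetCard.card]

section Ascents

variable {n : ℕ} {α : Type*} [LinearOrder α]

def ascents (f : Fin (n + 1) → α) : Finset (Fin n) := {i | f i.castSucc < f i.succ}

@[simp]
theorem mem_ascents {f : Fin (n + 1) → α} {i : Fin n} :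
    i ∈ ascents f ↔ f i.castSucc < f i.succ := by
  simp [ascents]

theorem exists_mem_ascents_between {f : Fin (n + 1) → α} {k l : Fin (n + 1)} (hkl : k ≤ l)
    (hf : f k < f l) : ∃ p ∈ ascents f, k ≤ p.castSucc ∧ p.succ ≤ l := by
  induction l using Fin.induction with
  | zero => rw [Fin.le_zero_iff.1 hkl] at hf; exact absurd hf (lt_irrefl _)
  | succ p ih =>
    have hkp : k ≤ p.castSucc :=
      Fin.le_castSucc_iff.2 (hkl.lt_of_ne (by rintro rfl; exact lt_irrefl _ hf))
    by_cases hp : f k < f p.castSucc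
    · obtain ⟨q, hq, hkq, hqp⟩ := ih hkp hp
      exact ⟨q, hq, hkq, hqp.trans (Fin.castSucc_le_succ p)⟩
    · exact ⟨p, mem_ascents.2 ((not_lt.1 hp).trans_lt hf), hkp, le_rfl⟩

end Ascents

theorem card_ascentIndices_eq (n : ℕ) (σ : Equiv.Perm (Fin (n + 1))) :
    Nat.card {i : ℕ // ∃ h1 : i + 1 < n + 1,
      σ ⟨i, Nat.lt_of_succ_lt h1⟩ < σ ⟨i + 1, h1⟩} = #(ascents σ) := by
  rw [← Nat.card_eq_finsetCard]
  exact Nat.card_congr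
    { toFun i := ⟨⟨i.1, Nat.succ_lt_succ_iff.1 i.2.1⟩, mem_ascents.2 i.2.2⟩
      invFun j := ⟨j.1.1, by omega, mem_ascents.1 j.2⟩
      left_inv _ := rfl
      right_inv _ := rfl }

theorem eulerianNumber_eq_card (n r : ℕ) :
    eulerianNumber (n + 1) r = #{σ : Equiv.Perm (Fin (n + 1)) | #(ascents σ) = r} := by
  simp_rw [eulerianNumber, card_ascentIndices_eq, Nat.card_eq_fintype_card, Fintype.card_subtype]

section GappedMono

variable {n : ℕ}

theorem Fin.forall_mem_Icc_iff_of_monotone {α : Type*} [Preorder α] {f : Fin (n + 1) → α}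
    (hf : Monotone f) {a b : α} : (∀ v, f v ∈ Set.Icc a b) ↔ a ≤ f 0 ∧ f (Fin.last n) ≤ b :=
  ⟨fun h => ⟨(h 0).1, (h _).2⟩, fun h v =>
    ⟨h.1.trans (hf (Fin.zero_le v)), (hf (Fin.le_last v)).trans h.2⟩⟩

def IsGappedMono (s : Finset (Fin n)) (m : ℤ) (y : Fin (n + 1) → ℤ) : Prop :=
  (∀ v, y v ∈ Set.Icc 1 m) ∧ Monotone y ∧ ∀ i ∈ s, y i.castSucc + 2 ≤ y i.succ

def gapShift (s : Finset (Fin n)) (v : Fin (n + 1)) : ℤ :=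
  (v : ℤ) - 2 * #{i ∈ s | i.castSucc < v}

theorem gapShift_zero (s : Finset (Fin n)) : gapShift s 0 = 0 := by
  simp [gapShift]

theorem gapShift_last (s : Finset (Fin n)) : gapShift s (Fin.last n) = n - 2 * #s := by
  simp [gapShift, Fin.castSucc_lt_last]

theorem gapShift_succ (s : Finset (Fin n)) (i : Fin n) :
    gapShift s i.succ = gapShift s i.castSucc + 1 - 2 * if i ∈ s then 1 else 0 := by
  have hsplit : #{j ∈ s | j ≤ i} = #{j ∈ s | j < i} + if i ∈ s then 1 else 0 := by
    split_ifs with hi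
    · rw [← card_insert_of_notMem (s := {j ∈ s | j < i}) (a := i) (by simp)]
      congr 1
      ext j
      simp only [mem_filter, mem_insert, le_iff_lt_or_eq]
      grind
    · congr 1
      ext j
      simp only [mem_filter, le_iff_lt_or_eq]
      grind
  simp only [gapShift, Fin.castSucc_lt_succ_iff, Fin.castSucc_lt_castSucc_iff, hsplit,
    Fin.val_succ, Fin.val_castSucc]
  push_cast
  ring

theorem strictMono_add_gapShift_iff {s : Finset (Fin n)} {y : Fin (n + 1) → ℤ} :
    StrictMono (y + gapShift s) ↔ Monotone y ∧ ∀ i ∈ s, y i.castSucc + 2 ≤ y i.succ := by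
  simp only [Fin.strictMono_iff_lt_succ, Fin.monotone_iff_le_succ, Pi.add_apply, gapShift_succ,
    ← forall_and]
  refine forall_congr' fun i => ?_
  split_ifs with hi <;> simp only [hi, true_implies, false_implies, and_true] <;> omega

theorem isGappedMono_iff {s : Finset (Fin n)} {m : ℤ} {y : Fin (n + 1) → ℤ} :
    IsGappedMono s m y ↔
      StrictMono (y + gapShift s) ∧ ∀ v, (y + gapShift s) v ∈ Set.Icc 1 (m + n - 2 * #s) := by
  rw [strictMono_add_gapShift_iff]
  refine ⟨fun ⟨hbox, hmono, hgap⟩ => ⟨⟨hmono, hgap⟩, ?_⟩,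
    fun ⟨⟨hmono, hgap⟩, hbox⟩ => ⟨?_, hmono, hgap⟩⟩ <;>
  · have hz := (strictMono_add_gapShift_iff.2 ⟨hmono, hgap⟩).monotone
    rw [Fin.forall_mem_Icc_iff_of_monotone hz, Fin.forall_mem_Icc_iff_of_monotone hmono] at *
    simp only [Pi.add_apply, gapShift_zero, gapShift_last] at *
    omega

theorem card_isGappedMono (s : Finset (Fin n)) (m : ℤ) :
    Nat.card {y // IsGappedMono s m y} = (m + n - 2 * #s).toNat.choose (n + 1) := by
  rw [Nat.card_congr (Equiv.subtypeEquiv (q := fun z => StrictMono z ∧ ∀ v, z v ∈ Set.Icc 1 _)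
      (Equiv.addRight (gapShift s)) fun _ => isGappedMono_iff),
    card_strictMono_mem, Nat.card_eq_fintype_card, Fintype.card_Icc, Int.card_Icc,
    add_sub_cancel_right]

instance (s : Finset (Fin n)) (m : ℤ) : Finite {y // IsGappedMono s m y} :=
  Finite.of_injective (fun y v => (⟨y.1 v, y.2.1 v⟩ : Set.Icc 1 m)) fun _ _ h =>
    Subtype.ext (funext fun v => congrArg Subtype.val (congrFun h v))

end GappedMono

section SortKey

variable {n : ℕ} {α : Type*}

def sortKey (x : Fin n → α) (i : Fin n) : α ×ₗ (Fin n)ᵒᵈ := toLex (x i, OrderDual.toDual i)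

theorem sortKey_injective (x : Fin n → α) : Function.Injective (sortKey x) :=
  fun _ _ h => congrArg (fun p : α ×ₗ (Fin n)ᵒᵈ => OrderDual.ofDual (ofLex p).2) h

variable [LinearOrder α]

theorem eq_sort_sortKey_iff {x : Fin n → α} {σ : Equiv.Perm (Fin n)} :
    σ = Tuple.sort (sortKey x) ↔ Monotone (sortKey x ∘ σ) := by
  rw [Tuple.eq_sort_iff]
  exact and_iff_left fun i j hij h => absurd (σ.injective (sortKey_injective x h)) hij.ne

theorem monotone_sortKey_comp_iff {x : Fin (n + 1) → α} {σ : Equiv.Perm (Fin (n + 1))} :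
    Monotone (sortKey x ∘ σ) ↔
      Monotone (x ∘ σ) ∧ ∀ i ∈ ascents σ, x (σ i.castSucc) < x (σ i.succ) := by
  simp only [Fin.monotone_iff_le_succ, Function.comp_apply, sortKey, Prod.Lex.toLex_le_toLex,
    OrderDual.toDual_le_toDual, mem_ascents, ← forall_and]
  refine forall_congr' fun i => ?_
  have hne : σ i.castSucc ≠ σ i.succ := σ.injective.ne Fin.castSucc_lt_succ.ne
  rcases hne.lt_or_gt with h | h <;> simp [h, h.le, h.not_ge, le_iff_lt_or_eq, imp_or]

end SortKey

section Linial

variable {n : ℕ}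

def IsLinialFree (m : ℤ) (x : Fin n → ℤ) : Prop :=
  (∀ v, x v ∈ Set.Icc 1 m) ∧ ∀ i j, i < j → x j ≠ x i + 1

theorem latticeCount_one_one (n : ℕ) (m : ℤ) :
    latticeCount 1 1 n m = Nat.card {x : Fin n → ℤ // IsLinialFree m x} :=
  Nat.card_congr <| Equiv.subtypeEquivRight fun _ => and_congr_right fun _ =>
    forall₃_congr fun _ _ _ =>
      ⟨fun h => h 1 le_rfl le_rfl, fun h _ h1 h2 => le_antisymm h2 h1 ▸ h⟩

theorem ne_add_one_of_monotone_comp {x : Fin (n + 1) → ℤ} {σ : Equiv.Perm (Fin (n + 1))}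
    (hmono : Monotone (x ∘ σ)) (hgap : ∀ p ∈ ascents σ, x (σ p.castSucc) + 2 ≤ x (σ p.succ))
    {i j : Fin (n + 1)} (hij : i < j) : x j ≠ x i + 1 := by
  intro hx
  obtain ⟨k, rfl⟩ := σ.surjective i
  obtain ⟨l, rfl⟩ := σ.surjective j
  have hkl : k ≤ l := le_of_not_gt fun hlk => by
    have := hmono hlk.le
    simp only [Function.comp_apply] at this
    omega
  obtain ⟨p, hp, hkp, hpl⟩ := exists_mem_ascents_between hkl hij
  have := hmono hkp
  have := hmono hpl
  have := hgap p hp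
  simp only [Function.comp_apply] at *
  omega

theorem isGappedMono_comp_iff {m : ℤ} {x : Fin (n + 1) → ℤ} {σ : Equiv.Perm (Fin (n + 1))} :
    IsGappedMono (ascents σ) m (x ∘ σ) ↔ IsLinialFree m x ∧ Tuple.sort (sortKey x) = σ := by
  rw [eq_comm, eq_sort_sortKey_iff, monotone_sortKey_comp_iff]
  constructor
  · rintro ⟨hbox, hmono, hgap⟩
    exact ⟨⟨σ.forall_congr_right.1 hbox, fun _ _ => ne_add_one_of_monotone_comp hmono hgap⟩,
      hmono, fun i hi => by have := hgap i hi; simp only [Function.comp_apply] at this; omega⟩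
  · rintro ⟨⟨hbox, hfree⟩, hmono, hasc⟩
    refine ⟨fun v => hbox _, hmono, fun i hi => ?_⟩
    have := hasc i hi
    have := hfree _ _ (mem_ascents.1 hi)
    simp only [Function.comp_apply]
    omega

def linialFiberEquiv (m : ℤ) (σ : Equiv.Perm (Fin (n + 1))) :
    {x : {x // IsLinialFree m x} // Tuple.sort (sortKey x.1) = σ} ≃
      {y // IsGappedMono (ascents σ) m y} where
  toFun x := ⟨x.1.1 ∘ σ, isGappedMono_comp_iff.2 ⟨x.1.2, x.2⟩⟩
  invFun y :=
    have h := isGappedMono_comp_iff.1 (by simpa [Function.comp_assoc] using y.2)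
    ⟨⟨y.1 ∘ σ.symm, h.1⟩, h.2⟩
  left_inv x := by ext; simp
  right_inv y := by ext; simp

theorem card_isLinialFree (m : ℤ) :
    Nat.card {x : Fin (n + 1) → ℤ // IsLinialFree m x} =
      ∑ σ : Equiv.Perm (Fin (n + 1)), Nat.card {y // IsGappedMono (ascents σ) m y} := by
  have := fun σ : Equiv.Perm (Fin (n + 1)) => Finite.of_equiv _ (linialFiberEquiv m σ).symm
  rw [← Nat.card_congr (Equiv.sigmaFiberEquiv fun x : {x // IsLinialFree m x} =>
    Tuple.sort (sortKey x.1)), Nat.card_sigma]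
  exact Finset.sum_congr rfl fun σ _ => Nat.card_congr (linialFiberEquiv m σ)

end Linial

theorem linial_count_general (n : ℕ) (hn : 2 ≤ n) (m : ℤ) :
    latticeCount 1 1 n m =
      ∑ r ∈ Finset.range n, eulerianNumber n r * intChoose (m + n - 1 - 2 * r) n := by
  obtain ⟨n, rfl⟩ : ∃ k, n = k + 1 := ⟨n - 1, by omega⟩
  have hasc : ∀ σ ∈ (univ : Finset (Equiv.Perm (Fin (n + 1)))), #(ascents σ) ∈ range (n + 1) :=
    fun σ _ => mem_range.2 (Nat.lt_succ_of_le ((card_le_univ _).trans_eq (Fintype.card_fin n)))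
  rw [latticeCount_one_one, card_isLinialFree, ← sum_fiberwise_of_maps_to hasc]
  refine sum_congr rfl fun r _ => ?_
  rw [sum_congr rfl fun σ hσ => by rw [card_isGappedMono, (mem_filter.1 hσ).2], sum_const,
    smul_eq_mul, eulerianNumber_eq_card, intChoose]
  push_cast
  ring_nf

/-- **Linial arrangement count.**  For `n ≥ 2` and `m ≥ 0`, the number of integer points of
`[1, m]^n` lying on none of the hyperplanes `x j = x i + 1` (`1 ≤ i < j ≤ n`) of the Linial
arrangement is `∑_{r=0}^{n−1} A(n, r+1) C(m + n − 1 − 2r, n)`. -/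
theorem linial_count (n : ℕ) (hn : 2 ≤ n) (m : ℤ) (hm : 0 ≤ m) :
    latticeCount 1 1 n m =
      ∑ r ∈ Finset.range n, eulerianNumber n r * intChoose (m + n - 1 - 2 * r) n :=
  linial_count_general n hn m
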